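/- arXiv:1606.07250 — 2 statements merged into one kernel-verified Lean document; each statement's English description precedes it below -/
import Mathlib

section
/- Let ω be a weight on [0,1] satisfying the dyadic reverse Carleson condition of order min{2/p, 2/p'} with constant C, where 1 < p < ∞ and 1/p + 1/p' = 1. Then ‖∑_{I∈Λ} H_I/‖H_I‖_{p,ω}‖_{X^p(ω)} ≈ (card Λ)^{1/p} for all finite families Λ of dyadic intervals, with implicit constants depending only on C and p. In particular the normalized Haar basis is democratic in X^p(ω). -/
open MeasureTheory Set

noncomputable def dyadicI (n k : ℕ) : Set ℝ := Set.Ico ((k : ℝ) / 2 ^ n) (((k : ℝ) + 1) / 2 ^ n)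

def IsDyadic (I : ℕ × ℕ) : Prop := I.2 < 2 ^ I.1

noncomputable def wInt (w : ℝ → ℝ) (I : ℕ × ℕ) : ℝ := ∫ x in dyadicI I.1 I.2, w x

def ancestors (J : ℕ × ℕ) : Set (ℕ × ℕ) :=
  {I | IsDyadic I ∧ dyadicI J.1 J.2 ⊆ dyadicI I.1 I.2}

noncomputable def XnormOne (w : ℝ → ℝ) (p : ℝ) (Λ : Finset (ℕ × ℕ)) : ℝ :=
  (∫ x in Set.Ico (0 : ℝ) 1,
      (∑ I ∈ Λ, Set.indicator (dyadicI I.1 I.2) (fun _ => (wInt w I) ^ (-(2 / p))) x) ^ (p / 2)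
        * w x) ^ (1 / p)

/-!
For `x ∈ [0,1)` the intervals of `Λ` containing `x` form a chain, and with `b_I = ω(I)⁻¹` the
integrand of `‖∑ H_I/‖H_I‖‖^p` at `x` is `(∑ b_I^{2/p})^{p/2} ω(x)`, while `∑_{I∈Λ} b_I χ_I ω`
integrates to exactly `#Λ`. So it suffices to compare `(∑ b_I^{2/p})^{p/2}` with `∑ b_I` along a
chain, up to constants. One direction is sub/superadditivity of `t ↦ t^{p/2}`. The other uses the
reverse Carleson condition: for `p ≥ 2` (order `2/p`) the partial sums of `b_I^{2/p}` are
dominated by their last term, which makes `(∑ a)^r ≤ r C^{r-1} ∑ a^r` telescope; for `p ≤ 2`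
(order `2/p'`) Cauchy–Schwarz with `2/p + 2/p' = 2` gives `(∑ b)^{2/p} ≤ C ∑ b^{2/p}`.
-/

open Real

namespace Real

variable {ι : Type*} {s : Finset ι} {f : ι → ℝ} {r : ℝ}

theorem sum_rpow_le_rpow_sum (hr : 1 ≤ r) (hf : ∀ i ∈ s, 0 ≤ f i) :
    ∑ i ∈ s, f i ^ r ≤ (∑ i ∈ s, f i) ^ r := by
  induction s using Finset.cons_induction with
  | empty => simp [zero_rpow (by linarith : r ≠ 0)]
  | cons a s ha ih =>
    rw [Finset.forall_mem_cons] at hf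
    rw [Finset.sum_cons, Finset.sum_cons]
    exact (add_le_add_right (ih hf.2) _).trans
      (add_rpow_le_rpow_add hf.1 (Finset.sum_nonneg hf.2) hr)

theorem rpow_sum_le_sum_rpow (hr₀ : 0 < r) (hr₁ : r ≤ 1) (hf : ∀ i ∈ s, 0 ≤ f i) :
    (∑ i ∈ s, f i) ^ r ≤ ∑ i ∈ s, f i ^ r := by
  induction s using Finset.cons_induction with
  | empty => simp [zero_rpow hr₀.ne']
  | cons a s ha ih =>
    rw [Finset.forall_mem_cons] at hf
    rw [Finset.sum_cons, Finset.sum_cons]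
    exact (rpow_add_le_add_rpow hf.1 (Finset.sum_nonneg hf.2) hr₀.le hr₁).trans
      (add_le_add_right (ih hf.2) _)

theorem add_rpow_le_rpow_add_mul {x y : ℝ} (hr : 1 ≤ r) (hx : 0 ≤ x) (hy : 0 ≤ y) :
    (x + y) ^ r ≤ x ^ r + r * y * (x + y) ^ (r - 1) := by
  rcases (add_nonneg hx hy).eq_or_lt with h0 | hS
  · obtain ⟨rfl, rfl⟩ : x = 0 ∧ y = 0 := ⟨by linarith, by linarith⟩
    simp [zero_rpow (by linarith : r ≠ 0)]
  set S := x + y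
  have hbern := one_add_mul_self_le_rpow_one_add (s := -(y / S))
    (by rw [neg_le_neg_iff, div_le_one hS]; linarith) hr
  have hxS : 1 + -(y / S) = x / S := by field_simp; ring
  rw [hxS, div_rpow hx hS.le, le_div_iff₀ (rpow_pos_of_pos hS r)] at hbern
  have hSr : S ^ r = S * S ^ (r - 1) := by
    rw [← rpow_one_add' hS.le (by linarith), add_sub_cancel]
  have : (1 + r * -(y / S)) * S ^ r = S ^ r - r * y * S ^ (r - 1) := by
    rw [hSr]; field_simp; ring
  linarith

/-- Removing an element `a` of largest level lowers `(∑ f) ^ r` by at most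
`r f a (∑ f) ^ (r - 1)`, and the hypothesis at `a` bounds `∑ f` by `C f a`. -/
theorem rpow_sum_le_mul_sum_rpow_of_sum_filter_le [DecidableEq ι] {C : ℝ} (hr : 1 ≤ r)
    (hC : 0 < C) (ℓ : ι → ℕ) (hf : ∀ i ∈ s, 0 < f i)
    (hchain : ∀ i ∈ s, ∑ j ∈ s with ℓ j ≤ ℓ i, f j ≤ C * f i) :
    (∑ i ∈ s, f i) ^ r ≤ r * C ^ (r - 1) * ∑ i ∈ s, f i ^ r := by
  induction s using Finset.induction_on_max_value ℓ with
  | empty => simp [zero_rpow (by linarith : r ≠ 0)]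
  | insert a s ha hmax ih =>
    have hsum_le : ∑ j ∈ insert a s, f j ≤ C * f a := by
      have := hchain a (Finset.mem_insert_self a s)
      rwa [Finset.filter_true_of_mem] at this
      simpa [Finset.forall_mem_insert] using hmax
    have hfa := hf a (Finset.mem_insert_self a s)
    have hf' : ∀ i ∈ s, 0 < f i := fun i hi => hf i (Finset.mem_insert_of_mem hi)
    have hchain' : ∀ i ∈ s, ∑ j ∈ s with ℓ j ≤ ℓ i, f j ≤ C * f i := fun i hi =>
      (Finset.sum_le_sum_of_subset_of_nonneg
        (Finset.filter_subset_filter _ (Finset.subset_insert a s))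
        (fun j hj _ => (hf j (Finset.mem_filter.1 hj).1).le)).trans
        (hchain i (Finset.mem_insert_of_mem hi))
    have hlast : f a * (∑ j ∈ insert a s, f j) ^ (r - 1) ≤ C ^ (r - 1) * f a ^ r := calc
      f a * (∑ j ∈ insert a s, f j) ^ (r - 1) ≤ f a * (C * f a) ^ (r - 1) := by
        gcongr
        exact Finset.sum_nonneg fun j hj => (hf j hj).le
      _ = C ^ (r - 1) * f a ^ r := by
        rw [mul_rpow hC.le hfa.le, mul_left_comm, ← rpow_one_add' hfa.le (by linarith),
          add_sub_cancel]
    rw [Finset.sum_insert ha, add_comm (f a)] at hlast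
    rw [Finset.sum_insert ha, Finset.sum_insert ha, add_comm (f a), add_comm (f a ^ r)]
    calc (∑ j ∈ s, f j + f a) ^ r
        ≤ (∑ j ∈ s, f j) ^ r + r * f a * (∑ j ∈ s, f j + f a) ^ (r - 1) :=
          add_rpow_le_rpow_add_mul hr (Finset.sum_nonneg fun j hj => (hf' j hj).le) hfa.le
      _ ≤ r * C ^ (r - 1) * ∑ j ∈ s, f j ^ r + r * (C ^ (r - 1) * f a ^ r) := by
          rw [mul_assoc r]
          gcongr
          exact ih hf' hchain'
      _ = r * C ^ (r - 1) * (∑ j ∈ s, f j ^ r + f a ^ r) := by ring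

theorem rpow_sum_le_mul_sum_rpow_of_sum_rpow_le {u v C : ℝ} (hu : 0 < u) (huv : u + v = 2)
    (hf : ∀ i ∈ s, 0 < f i) (h : ∑ i ∈ s, f i ^ v ≤ C * (∑ i ∈ s, f i) ^ v) :
    (∑ i ∈ s, f i) ^ u ≤ C * ∑ i ∈ s, f i ^ u := by
  rcases s.eq_empty_or_nonempty with rfl | hne
  · simp [zero_rpow hu.ne']
  have hS : 0 < ∑ i ∈ s, f i := Finset.sum_pos hf hne
  have hprod : ∀ i ∈ s, f i ^ (u / 2) * f i ^ (v / 2) = f i := fun i hi => by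
    rw [← rpow_add (hf i hi), ← add_div, huv, div_self two_ne_zero, rpow_one]
  have hsq : ∀ e : ℝ, ∀ i ∈ s, (f i ^ (e / 2)) ^ 2 = f i ^ e := fun e i hi => by
    rw [← rpow_natCast, ← rpow_mul (hf i hi).le]; norm_num
  have hcs : (∑ i ∈ s, f i) ^ 2 ≤ (∑ i ∈ s, f i ^ u) * ∑ i ∈ s, f i ^ v := by
    have := Finset.sum_mul_sq_le_sq_mul_sq s (fun i => f i ^ (u / 2)) (fun i => f i ^ (v / 2))
    rwa [Finset.sum_congr rfl hprod, Finset.sum_congr rfl (hsq u),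
      Finset.sum_congr rfl (hsq v)] at this
  have hsplit : (∑ i ∈ s, f i) ^ 2 = (∑ i ∈ s, f i) ^ u * (∑ i ∈ s, f i) ^ v := by
    rw [← rpow_add hS, huv, ← rpow_natCast]; norm_num
  refine le_of_mul_le_mul_right ?_ (rpow_pos_of_pos hS v)
  calc (∑ i ∈ s, f i) ^ u * (∑ i ∈ s, f i) ^ v
      ≤ (∑ i ∈ s, f i ^ u) * ∑ i ∈ s, f i ^ v := hsplit ▸ hcs
    _ ≤ (∑ i ∈ s, f i ^ u) * (C * (∑ i ∈ s, f i) ^ v) := by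
        gcongr
        exact Finset.sum_nonneg fun i hi => (rpow_pos_of_pos (hf i hi) u).le
    _ = C * (∑ i ∈ s, f i ^ u) * (∑ i ∈ s, f i) ^ v := by ring

end Real

section ChainSums

variable {ι : Type*} {s : Finset ι} {f : ι → ℝ} {p C : ℝ}

lemma rpow_two_div_rpow_div_two (hp : 0 < p) {x : ℝ} (hx : 0 ≤ x) :
    (x ^ (2 / p)) ^ (p / 2) = x := by
  rw [← rpow_mul hx, show 2 / p * (p / 2) = 1 by field_simp, rpow_one]

lemma sum_rpow_comparison_of_le_two (ℓ : ι → ℕ) (hp : 1 < p) (hp2 : p ≤ 2) (hC : 0 < C)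
    (hf : ∀ i ∈ s, 0 < f i)
    (hchain : ∀ i ∈ s, ∑ j ∈ s with ℓ j ≤ ℓ i, f j ^ (2 / (p / (p - 1)))
      ≤ C * f i ^ (2 / (p / (p - 1)))) :
    (∑ i ∈ s, f i ^ (2 / p)) ^ (p / 2) ≤ ∑ i ∈ s, f i ∧
      ∑ i ∈ s, f i ≤ C ^ (p / 2) * (∑ i ∈ s, f i ^ (2 / p)) ^ (p / 2) := by
  have hp0 : 0 < p := by linarith
  have hpow : ∀ i ∈ s, (f i ^ (2 / p)) ^ (p / 2) = f i := fun i hi =>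
    rpow_two_div_rpow_div_two hp0 (hf i hi).le
  constructor
  · calc (∑ i ∈ s, f i ^ (2 / p)) ^ (p / 2) ≤ ∑ i ∈ s, (f i ^ (2 / p)) ^ (p / 2) :=
          rpow_sum_le_sum_rpow (by positivity) (by linarith)
            fun i hi => (rpow_pos_of_pos (hf i hi) _).le
      _ = ∑ i ∈ s, f i := Finset.sum_congr rfl hpow
  rcases s.eq_empty_or_nonempty with rfl | hne
  · simp [zero_rpow (by positivity : p / 2 ≠ 0)]
  obtain ⟨i₀, hi₀, hmax⟩ := s.exists_max_image ℓ hne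
  have hv : ∑ i ∈ s, f i ^ (2 / (p / (p - 1))) ≤ C * (∑ i ∈ s, f i) ^ (2 / (p / (p - 1))) := by
    calc ∑ i ∈ s, f i ^ (2 / (p / (p - 1))) ≤ C * f i₀ ^ (2 / (p / (p - 1))) := by
          simpa [Finset.filter_true_of_mem hmax] using hchain i₀ hi₀
      _ ≤ C * (∑ i ∈ s, f i) ^ (2 / (p / (p - 1))) := by
          gcongr
          · exact (hf i₀ hi₀).le
          · exact Finset.single_le_sum (fun i hi => (hf i hi).le) hi₀
  have huv : 2 / p + 2 / (p / (p - 1)) = 2 := by field_simp; ring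
  have hSnn : 0 ≤ ∑ i ∈ s, f i := Finset.sum_nonneg fun i hi => (hf i hi).le
  calc ∑ i ∈ s, f i = ((∑ i ∈ s, f i) ^ (2 / p)) ^ (p / 2) :=
        (rpow_two_div_rpow_div_two hp0 hSnn).symm
    _ ≤ (C * ∑ i ∈ s, f i ^ (2 / p)) ^ (p / 2) := by
        gcongr
        exact rpow_sum_le_mul_sum_rpow_of_sum_rpow_le (by positivity) huv hf hv
    _ = C ^ (p / 2) * (∑ i ∈ s, f i ^ (2 / p)) ^ (p / 2) :=
        mul_rpow hC.le (Finset.sum_nonneg fun i hi => (rpow_pos_of_pos (hf i hi) _).le)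

lemma sum_rpow_comparison_of_two_le [DecidableEq ι] (ℓ : ι → ℕ) (hp : 2 ≤ p) (hC : 0 < C)
    (hf : ∀ i ∈ s, 0 < f i)
    (hchain : ∀ i ∈ s, ∑ j ∈ s with ℓ j ≤ ℓ i, f j ^ (2 / p) ≤ C * f i ^ (2 / p)) :
    (∑ i ∈ s, f i ^ (2 / p)) ^ (p / 2) ≤ p / 2 * C ^ (p / 2 - 1) * ∑ i ∈ s, f i ∧
      ∑ i ∈ s, f i ≤ (∑ i ∈ s, f i ^ (2 / p)) ^ (p / 2) := by
  have hp0 : 0 < p := by linarith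
  have hpow : ∀ i ∈ s, (f i ^ (2 / p)) ^ (p / 2) = f i := fun i hi =>
    rpow_two_div_rpow_div_two hp0 (hf i hi).le
  have hr : 1 ≤ p / 2 := by linarith
  have hf' : ∀ i ∈ s, 0 < f i ^ (2 / p) := fun i hi => rpow_pos_of_pos (hf i hi) _
  constructor
  · calc (∑ i ∈ s, f i ^ (2 / p)) ^ (p / 2)
          ≤ p / 2 * C ^ (p / 2 - 1) * ∑ i ∈ s, (f i ^ (2 / p)) ^ (p / 2) :=
          rpow_sum_le_mul_sum_rpow_of_sum_filter_le hr hC ℓ hf' hchain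
      _ = p / 2 * C ^ (p / 2 - 1) * ∑ i ∈ s, f i := by rw [Finset.sum_congr rfl hpow]
  · calc ∑ i ∈ s, f i = ∑ i ∈ s, (f i ^ (2 / p)) ^ (p / 2) := (Finset.sum_congr rfl hpow).symm
      _ ≤ (∑ i ∈ s, f i ^ (2 / p)) ^ (p / 2) := sum_rpow_le_rpow_sum hr fun i hi => (hf' i hi).le

lemma exists_sum_rpow_comparison [DecidableEq ι] (ℓ : ι → ℕ) (hp : 1 < p) (hC : 0 < C) :
    ∃ K > 0, ∃ K' > 0, ∀ (s : Finset ι) (f : ι → ℝ), (∀ i ∈ s, 0 < f i) →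
      (∀ i ∈ s, ∑ j ∈ s with ℓ j ≤ ℓ i, f j ^ min (2 / p) (2 / (p / (p - 1)))
        ≤ C * f i ^ min (2 / p) (2 / (p / (p - 1)))) →
      (∑ i ∈ s, f i ^ (2 / p)) ^ (p / 2) ≤ K * ∑ i ∈ s, f i ∧
        ∑ i ∈ s, f i ≤ K' * (∑ i ∈ s, f i ^ (2 / p)) ^ (p / 2) := by
  have hp0 : 0 < p := by linarith
  have hq : 2 / (p / (p - 1)) = 2 * (p - 1) / p := by field_simp
  rcases le_total p 2 with hp2 | hp2
  · have hmin : min (2 / p) (2 / (p / (p - 1))) = 2 / (p / (p - 1)) :=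
      min_eq_right (by rw [hq]; gcongr; linarith)
    refine ⟨1, one_pos, C ^ (p / 2), by positivity, fun s f hf hchain => ?_⟩
    rw [hmin] at hchain
    simpa using sum_rpow_comparison_of_le_two ℓ hp hp2 hC hf hchain
  · have hmin : min (2 / p) (2 / (p / (p - 1))) = 2 / p :=
      min_eq_left (by rw [hq]; gcongr; linarith)
    refine ⟨p / 2 * C ^ (p / 2 - 1), by positivity, 1, one_pos, fun s f hf hchain => ?_⟩
    rw [hmin] at hchain
    simpa using sum_rpow_comparison_of_two_le ℓ hp2 hC hf hchain

end ChainSums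

section Dyadic

variable {n k m l : ℕ}

lemma dyadicI_eq_Ico : dyadicI n k = Ico ((k : ℝ) / 2 ^ n) (k / 2 ^ n + 1 / 2 ^ n) := by
  rw [dyadicI, add_div]

lemma le_of_dyadicI_subset (h : dyadicI n k ⊆ dyadicI m l) : m ≤ n := by
  rw [dyadicI_eq_Ico, dyadicI_eq_Ico, Ico_subset_Ico_iff (by simp)] at h
  have : (1 : ℝ) / 2 ^ n ≤ 1 / 2 ^ m := by linarith [h.1, h.2]
  rw [one_div_le_one_div (by positivity) (by positivity)] at this
  exact_mod_cast (pow_le_pow_iff_right₀ (by norm_num : (1 : ℝ) < 2)).mp this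

lemma ancestors_finite (J : ℕ × ℕ) : (ancestors J).Finite :=
  (Set.finite_Iic (J.1, 2 ^ J.1)).subset fun I ⟨hI, hsub⟩ =>
    have h1 : I.1 ≤ J.1 := le_of_dyadicI_subset hsub
    Prod.mk_le_mk.2 ⟨h1, hI.le.trans (Nat.pow_le_pow_right two_pos h1)⟩

lemma mem_dyadicI_iff {x : ℝ} (hx : 0 ≤ x) : x ∈ dyadicI n k ↔ ⌊x * 2 ^ n⌋₊ = k := by
  rw [Nat.floor_eq_iff (by positivity), dyadicI, mem_Ico, div_le_iff₀ (by positivity),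
    lt_div_iff₀ (by positivity)]

lemma nonneg_of_mem_dyadicI {x : ℝ} (hx : x ∈ dyadicI n k) : 0 ≤ x :=
  (div_nonneg k.cast_nonneg (by positivity)).trans hx.1

lemma floor_mul_two_pow_of_le (hmn : m ≤ n) (x : ℝ) :
    ⌊x * 2 ^ m⌋₊ = ⌊x * 2 ^ n⌋₊ / 2 ^ (n - m) := by
  rw [← Nat.floor_div_natCast, Nat.cast_pow, Nat.cast_ofNat, mul_div_assoc,
    ← Nat.sub_add_cancel hmn, pow_add, Nat.add_sub_cancel, mul_div_cancel_left₀ _ (by positivity)]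

lemma dyadicI_subset_of_le (hmn : m ≤ n) {x : ℝ} (hx : x ∈ dyadicI n k) (hx' : x ∈ dyadicI m l) :
    dyadicI n k ⊆ dyadicI m l := by
  intro y hy
  have hx0 := nonneg_of_mem_dyadicI hx
  rw [mem_dyadicI_iff hx0] at hx hx'
  have hy0 := nonneg_of_mem_dyadicI hy
  rw [mem_dyadicI_iff hy0] at hy ⊢
  rw [floor_mul_two_pow_of_le hmn, hy, ← hx, ← floor_mul_two_pow_of_le hmn, hx']

lemma dyadicI_subset_Ico (h : IsDyadic (n, k)) : dyadicI n k ⊆ Ico (0 : ℝ) 1 := by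
  rw [dyadicI]
  refine Ico_subset_Ico (by positivity) ?_
  rw [div_le_one (by positivity)]
  exact_mod_cast (h : k < 2 ^ n)

end Dyadic

section Weight

variable {w : ℝ → ℝ} {p C : ℝ}

def ReverseCarleson (w : ℝ → ℝ) (α C : ℝ) : Prop :=
  ∀ J, IsDyadic J → ∑' I : ancestors J, wInt w I.1 ^ (-α) ≤ C * wInt w J ^ (-α)

lemma measurableSet_dyadicI (n k : ℕ) : MeasurableSet (dyadicI n k) := measurableSet_Ico

lemma wInt_nonneg (hw : ∀ x, 0 ≤ w x) (I : ℕ × ℕ) : 0 ≤ wInt w I :=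
  setIntegral_nonneg measurableSet_Ico fun x _ => hw x

lemma integrableOn_of_wInt_pos (h : 0 < wInt w (0, 0)) : IntegrableOn w (Ico 0 1) := by
  by_contra hw
  simp [wInt, dyadicI, integral_undef hw] at h

lemma ReverseCarleson.sum_le {α : ℝ} (hR : ReverseCarleson w α C) (hw : ∀ x, 0 ≤ w x)
    {J : ℕ × ℕ} (hJ : IsDyadic J) {s : Finset (ℕ × ℕ)} (hs : ∀ I ∈ s, I ∈ ancestors J) :
    ∑ I ∈ s, wInt w I ^ (-α) ≤ C * wInt w J ^ (-α) := by
  have := (ancestors_finite J).to_subtype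
  calc ∑ I ∈ s, wInt w I ^ (-α) = ∑' I : (s : Set (ℕ × ℕ)), wInt w I ^ (-α) :=
        (Finset.tsum_subtype s _).symm
    _ ≤ ∑' I : ancestors J, wInt w I.1 ^ (-α) :=
        Summable.tsum_le_tsum_of_inj (Set.inclusion hs) (Set.inclusion_injective hs)
          (fun _ _ => rpow_nonneg (wInt_nonneg hw _) _) (fun _ => le_rfl)
          Summable.of_finite Summable.of_finite
    _ ≤ C * wInt w J ^ (-α) := hR J hJ

open scoped Classical in
lemma ReverseCarleson.sum_chain_le {α : ℝ} (hR : ReverseCarleson w α C) (hw : ∀ x, 0 ≤ w x)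
    {Λ : Finset (ℕ × ℕ)} (hΛ : ∀ I ∈ Λ, IsDyadic I) {x : ℝ} {I : ℕ × ℕ}
    (hI : I ∈ {J ∈ Λ | x ∈ dyadicI J.1 J.2}) :
    ∑ J ∈ {J ∈ Λ | x ∈ dyadicI J.1 J.2} with J.1 ≤ I.1, (wInt w J)⁻¹ ^ α
      ≤ C * (wInt w I)⁻¹ ^ α := by
  simp only [← rpow_neg_eq_inv_rpow]
  rw [Finset.mem_filter] at hI
  refine hR.sum_le hw (hΛ I hI.1) fun J hJ => ?_
  simp only [Finset.mem_filter] at hJ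
  exact ⟨hΛ J hJ.1.1, dyadicI_subset_of_le hJ.2 hI.2 hJ.1.2⟩

open scoped Classical in
lemma sum_indicator_dyadicI (Λ : Finset (ℕ × ℕ)) (g : ℕ × ℕ → ℝ) (x : ℝ) :
    ∑ I ∈ Λ, indicator (dyadicI I.1 I.2) (fun _ => g I) x
      = ∑ I ∈ {I ∈ Λ | x ∈ dyadicI I.1 I.2}, g I := by
  simp [Finset.sum_filter, indicator_apply]

lemma exists_sum_indicator_comparison (hp : 1 < p) (hC : 0 < C) (hw : ∀ x, 0 ≤ w x)
    (hpos : ∀ I, IsDyadic I → 0 < wInt w I)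
    (hR : ReverseCarleson w (min (2 / p) (2 / (p / (p - 1)))) C) :
    ∃ K > 0, ∃ K' > 0, ∀ Λ : Finset (ℕ × ℕ), (∀ I ∈ Λ, IsDyadic I) → ∀ x : ℝ,
      (∑ I ∈ Λ, indicator (dyadicI I.1 I.2) (fun _ => wInt w I ^ (-(2 / p))) x) ^ (p / 2)
          ≤ K * ∑ I ∈ Λ, indicator (dyadicI I.1 I.2) (fun _ => (wInt w I)⁻¹) x ∧
        ∑ I ∈ Λ, indicator (dyadicI I.1 I.2) (fun _ => (wInt w I)⁻¹) x
          ≤ K' * (∑ I ∈ Λ, indicator (dyadicI I.1 I.2) (fun _ => wInt w I ^ (-(2 / p))) x)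
            ^ (p / 2) := by
  obtain ⟨K, hK, K', hK', hcmp⟩ := exists_sum_rpow_comparison (Prod.fst : ℕ × ℕ → ℕ) hp hC
  refine ⟨K, hK, K', hK', fun Λ hΛ x => ?_⟩
  simp only [sum_indicator_dyadicI, rpow_neg_eq_inv_rpow]
  classical
  exact hcmp _ (fun I => (wInt w I)⁻¹)
    (fun I hI => inv_pos.2 (hpos I (hΛ I (Finset.mem_filter.1 hI).1)))
    (fun I hI => hR.sum_chain_le hw hΛ hI)

lemma integral_sum_indicator_inv_wInt_mul (hw01 : IntegrableOn w (Ico 0 1))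
    (hpos : ∀ I, IsDyadic I → 0 < wInt w I) {Λ : Finset (ℕ × ℕ)} (hΛ : ∀ I ∈ Λ, IsDyadic I) :
    IntegrableOn (fun x => (∑ I ∈ Λ, indicator (dyadicI I.1 I.2) (fun _ => (wInt w I)⁻¹) x) * w x)
        (Ico 0 1) ∧
      ∫ x in Ico 0 1, (∑ I ∈ Λ, indicator (dyadicI I.1 I.2) (fun _ => (wInt w I)⁻¹) x) * w x
        = Λ.card := by
  have hsum : (fun x => (∑ I ∈ Λ, indicator (dyadicI I.1 I.2) (fun _ => (wInt w I)⁻¹) x) * w x)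
      = fun x => ∑ I ∈ Λ, indicator (dyadicI I.1 I.2) (fun y => (wInt w I)⁻¹ * w y) x := by
    ext x
    simp only [Finset.sum_mul, indicator_mul_left]
  have hint : ∀ I ∈ Λ, IntegrableOn
      (indicator (dyadicI I.1 I.2) (fun y => (wInt w I)⁻¹ * w y)) (Ico 0 1) :=
    fun I _ => (hw01.const_mul _).indicator (measurableSet_dyadicI _ _)
  have hone : ∀ I ∈ Λ, ∫ x in Ico 0 1, indicator (dyadicI I.1 I.2) (fun y => (wInt w I)⁻¹ * w y) x
      = 1 := fun I hI => by
    rw [setIntegral_indicator (measurableSet_dyadicI _ _), inter_eq_self_of_subset_right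
      (dyadicI_subset_Ico (hΛ I hI)), integral_const_mul]
    exact inv_mul_cancel₀ (hpos I (hΛ I hI)).ne'
  rw [hsum]
  refine ⟨integrable_finsetSum _ hint, ?_⟩
  rw [integral_finsetSum _ hint, Finset.sum_congr rfl hone]
  simp

lemma XnormOne_bounds (hp : 0 < p) (hw : ∀ x, 0 ≤ w x) (hw01 : IntegrableOn w (Ico 0 1))
    (hpos : ∀ I, IsDyadic I → 0 < wInt w I) {Λ : Finset (ℕ × ℕ)} (hΛ : ∀ I ∈ Λ, IsDyadic I)
    {K K' : ℝ} (hK : 0 < K) (hK' : 0 < K')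
    (hcmp : ∀ x : ℝ,
      (∑ I ∈ Λ, indicator (dyadicI I.1 I.2) (fun _ => wInt w I ^ (-(2 / p))) x) ^ (p / 2)
          ≤ K * ∑ I ∈ Λ, indicator (dyadicI I.1 I.2) (fun _ => (wInt w I)⁻¹) x ∧
        ∑ I ∈ Λ, indicator (dyadicI I.1 I.2) (fun _ => (wInt w I)⁻¹) x
          ≤ K' * (∑ I ∈ Λ, indicator (dyadicI I.1 I.2) (fun _ => wInt w I ^ (-(2 / p))) x)
            ^ (p / 2)) :
    (K' ^ (1 / p))⁻¹ * (Λ.card : ℝ) ^ (1 / p) ≤ XnormOne w p Λ ∧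
      XnormOne w p Λ ≤ K ^ (1 / p) * (Λ.card : ℝ) ^ (1 / p) := by
  set F := fun x => ∑ I ∈ Λ, indicator (dyadicI I.1 I.2) (fun _ => wInt w I ^ (-(2 / p))) x
  set G := fun x => ∑ I ∈ Λ, indicator (dyadicI I.1 I.2) (fun _ => (wInt w I)⁻¹) x
  obtain ⟨hGint, hGval⟩ := integral_sum_indicator_inv_wInt_mul hw01 hpos hΛ
  have hF : Measurable F := Finset.measurable_sum _ fun I _ =>
    measurable_const.indicator (measurableSet_dyadicI _ _)
  have hF_nonneg : ∀ x, 0 ≤ F x := fun x => Finset.sum_nonneg fun I _ =>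
    indicator_nonneg (fun _ _ => rpow_nonneg (wInt_nonneg hw I) _) x
  have hΦ_nonneg : ∀ x, 0 ≤ F x ^ (p / 2) * w x := fun x =>
    mul_nonneg (rpow_nonneg (hF_nonneg x) _) (hw x)
  have hΦ_le : ∀ x, F x ^ (p / 2) * w x ≤ K * (G x * w x) := fun x => by
    rw [← mul_assoc]; exact mul_le_mul_of_nonneg_right (hcmp x).1 (hw x)
  have hΦint : IntegrableOn (fun x => F x ^ (p / 2) * w x) (Ico 0 1) :=
    (hGint.const_mul K).mono'
      (((hF.pow_const _).aestronglyMeasurable).mul hw01.aestronglyMeasurable)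
      (ae_of_all _ fun x => by rw [norm_of_nonneg (hΦ_nonneg x)]; exact hΦ_le x)
  have hupper : ∫ x in Ico 0 1, F x ^ (p / 2) * w x ≤ K * Λ.card := by
    rw [← hGval, ← integral_const_mul]
    exact integral_mono hΦint (hGint.const_mul K) hΦ_le
  have hlower : (Λ.card : ℝ) ≤ K' * ∫ x in Ico 0 1, F x ^ (p / 2) * w x := by
    rw [← hGval, ← integral_const_mul]
    refine integral_mono hGint (hΦint.const_mul K') fun x => ?_
    rw [← mul_assoc]; exact mul_le_mul_of_nonneg_right (hcmp x).2 (hw x)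
  have hI_nonneg : 0 ≤ ∫ x in Ico 0 1, F x ^ (p / 2) * w x :=
    setIntegral_nonneg measurableSet_Ico fun x _ => hΦ_nonneg x
  have hX : XnormOne w p Λ = (∫ x in Ico 0 1, F x ^ (p / 2) * w x) ^ (1 / p) := rfl
  rw [hX]
  constructor
  · rw [inv_mul_le_iff₀ (by positivity), ← mul_rpow hK'.le hI_nonneg]
    exact rpow_le_rpow (Nat.cast_nonneg _) hlower (by positivity)
  · rw [← mul_rpow hK.le (Nat.cast_nonneg _)]
    exact rpow_le_rpow hI_nonneg hupper (by positivity)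

end Weight

theorem stmt11 (w : ℝ → ℝ) (p C : ℝ) (hp : 1 < p) (hC : 0 < C)
    (hw : ∀ x, 0 ≤ w x) (hpos : ∀ I, IsDyadic I → 0 < wInt w I)
    -- dyadic reverse Carleson condition of order `min{2/p, 2/p'}` with constant `C`,
    -- where `p' = p/(p-1)`
    (hDRCC : ∀ J, IsDyadic J →
      ∑' I : ancestors J, (wInt w I.1) ^ (-(min (2 / p) (2 / (p / (p - 1)))))
        ≤ C * (wInt w J) ^ (-(min (2 / p) (2 / (p / (p - 1)))))) :
    ∃ c > (0 : ℝ), ∃ c' > (0 : ℝ), ∀ Λ : Finset (ℕ × ℕ), (∀ I ∈ Λ, IsDyadic I) →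
      c * (Λ.card : ℝ) ^ (1 / p) ≤ XnormOne w p Λ ∧
      XnormOne w p Λ ≤ c' * (Λ.card : ℝ) ^ (1 / p) := by
  have hw01 : IntegrableOn w (Ico 0 1) :=
    integrableOn_of_wInt_pos (hpos (0, 0) (by simp [IsDyadic]))
  obtain ⟨K, hK, K', hK', hcmp⟩ := exists_sum_indicator_comparison hp hC hw hpos hDRCC
  exact ⟨(K' ^ (1 / p))⁻¹, by positivity, K ^ (1 / p), by positivity, fun Λ hΛ =>
    XnormOne_bounds (by linarith) hw hw01 hpos hΛ hK hK' (hcmp Λ hΛ)⟩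
end

section
/- Let X be a Banach space with normalized Schauder basis, x ∈ X, 0 < t ≤ 1, let A be a t-greedy set for x, and let B be any finite set. For any signs η on B∖A, define y_η = x − P_B(x) + (t/s)·γ·1_{η(B∖A)} where 0 < s ≤ t and γ = max_{j∈B∖A}|e_j*(x)| (with γ possibly 0). Then A∖B is an s-greedy set for y_η, i.e., min_{n∈A∖B}|eₙ*(y_η)| ≥ s·max_{n∉A∖B}|eₙ*(y_η)|. -/
/-!
On the coordinates outside `B` nothing changes, on `B ∩ A` the new coordinates vanish, and on
`B \ A` they all have modulus `(t / s) γ`. So the only new competitor against `A \ B` has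
`s`-weighted size `t γ`, and `γ = |e_j^*(x)|` for some `j ∉ A` is already beaten `t`-greedily
by every coordinate in `A`.
-/

open Finset

def IsGreedySet (t : ℝ) (f : ℕ → ℝ) (A : Finset ℕ) : Prop :=
  ∀ a ∈ A, ∀ b ∉ A, t * |f b| ≤ |f a|

theorem IsGreedySet.sdiff {f g : ℕ → ℝ} {A B : Finset ℕ} {s t : ℝ} (hst : s ≤ t)
    (hA : IsGreedySet t f A) (hg_out : ∀ n ∉ B, g n = f n) (hg_inter : ∀ n ∈ B ∩ A, g n = 0)
    (hg_new : ∀ n ∈ B \ A, ∃ j ∉ A, s * |g n| ≤ t * |f j|) :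
    IsGreedySet s g (A \ B) := by
  intro a ha b hb
  obtain ⟨haA, haB⟩ := mem_sdiff.mp ha
  rw [hg_out a haB]
  by_cases hbB : b ∈ B
  · by_cases hbA : b ∈ A
    · rw [hg_inter b (mem_inter.mpr ⟨hbB, hbA⟩), abs_zero, mul_zero]
      exact abs_nonneg _
    · obtain ⟨j, hjA, hj⟩ := hg_new b (mem_sdiff.mpr ⟨hbB, hbA⟩)
      exact hj.trans (hA a haA j hjA)
  · have hbA : b ∉ A := fun hbA => hb (mem_sdiff.mpr ⟨hbA, hbB⟩)
    rw [hg_out b hbB]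
    exact (mul_le_mul_of_nonneg_right hst (abs_nonneg _)).trans (hA a haA b hbA)

theorem biorthogonal_apply_sum {X F : Type*} [AddCommGroup X] [Module ℝ X] [FunLike F X ℝ]
    [LinearMapClass F ℝ X ℝ] {e : ℕ → X} {e' : ℕ → F} (hbi : ∀ n m, e' n (e m) = if n = m then 1 else 0)
    (S : Finset ℕ) (c : ℕ → ℝ) (m : ℕ) :
    e' m (∑ n ∈ S, c n • e n) = if m ∈ S then c m else 0 := by
  simp [map_sum, hbi]

theorem stmt17_general {X : Type*} [NormedAddCommGroup X] [NormedSpace ℝ X]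
    (e : ℕ → X) (e' : ℕ → X →L[ℝ] ℝ)
    (hbi : ∀ n m, e' n (e m) = if n = m then 1 else 0)
    (x : X) (t s γ : ℝ) (hs0 : 0 < s) (hst : s ≤ t)
    (A B : Finset ℕ)
    -- `A` is a `t`-greedy set for `x`
    (hA : ∀ a ∈ A, ∀ b ∉ A, t * |e' b x| ≤ |e' a x|)
    -- `γ = max_{j ∈ B \ A} |e_j^*(x)|` (and `γ = 0` if `B \ A = ∅`)
    (hγ2 : (B \ A).Nonempty → ∃ j ∈ B \ A, γ = |e' j x|)
    (η : ℕ → ℝ) (hη : ∀ n ∈ B \ A, η n = 1 ∨ η n = -1) :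
    -- `A \ B` is an `s`-greedy set for `y_η = x − P_B(x) + (t/s)γ·1_{η(B∖A)}`
    ∀ a ∈ A \ B, ∀ b ∉ A \ B,
      s * |e' b (x - ∑ n ∈ B, e' n x • e n + ((t / s) * γ) • ∑ n ∈ B \ A, η n • e n)|
        ≤ |e' a (x - ∑ n ∈ B, e' n x • e n + ((t / s) * γ) • ∑ n ∈ B \ A, η n • e n)| := by
  have coeff (m : ℕ) :
      e' m (x - ∑ n ∈ B, e' n x • e n + ((t / s) * γ) • ∑ n ∈ B \ A, η n • e n) =
        e' m x - (if m ∈ B then e' m x else 0) + t / s * γ * (if m ∈ B \ A then η m else 0) := by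
    rw [map_add, map_sub, map_smul, smul_eq_mul]
    rw [biorthogonal_apply_sum hbi, biorthogonal_apply_sum hbi]
  refine IsGreedySet.sdiff hst hA (fun n hn => ?_) (fun n hn => ?_) (fun n hn => ?_)
  · simp [coeff, hn]
  · have hn' : n ∉ B \ A := fun h => (mem_sdiff.mp h).2 (mem_inter.mp hn).2
    simp [coeff, (mem_inter.mp hn).1, hn']
  · obtain ⟨j, hj, rfl⟩ := hγ2 ⟨n, hn⟩
    refine ⟨j, (mem_sdiff.mp hj).2, le_of_eq ?_⟩
    have hη1 : |η n| = 1 := by rcases hη n hn with h | h <;> simp [h]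
    rw [coeff, if_pos (mem_sdiff.mp hn).1, if_pos hn, sub_self, zero_add, abs_mul, abs_mul, hη1,
      abs_abs, abs_of_pos (div_pos (hs0.trans_le hst) hs0)]
    field_simp

theorem stmt17 {X : Type*} [NormedAddCommGroup X] [NormedSpace ℝ X]
    (e : ℕ → X) (e' : ℕ → X →L[ℝ] ℝ)
    (hnorm : ∀ n, ‖e n‖ = 1)
    (hbi : ∀ n m, e' n (e m) = if n = m then 1 else 0)
    (x : X) (t s γ : ℝ) (ht0 : 0 < t) (ht1 : t ≤ 1) (hs0 : 0 < s) (hst : s ≤ t)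
    (A B : Finset ℕ)
    -- `A` is a `t`-greedy set for `x`
    (hA : ∀ a ∈ A, ∀ b ∉ A, t * |e' b x| ≤ |e' a x|)
    -- `γ = max_{j ∈ B \ A} |e_j^*(x)|` (and `γ = 0` if `B \ A = ∅`)
    (hγ1 : ∀ j ∈ B \ A, |e' j x| ≤ γ)
    (hγ2 : (B \ A).Nonempty → ∃ j ∈ B \ A, γ = |e' j x|)
    (hγ3 : B \ A = ∅ → γ = 0)
    (η : ℕ → ℝ) (hη : ∀ n ∈ B \ A, η n = 1 ∨ η n = -1) :
    -- `A \ B` is an `s`-greedy set for `y_η = x − P_B(x) + (t/s)γ·1_{η(B∖A)}`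
    ∀ a ∈ A \ B, ∀ b ∉ A \ B,
      s * |e' b (x - ∑ n ∈ B, e' n x • e n + ((t / s) * γ) • ∑ n ∈ B \ A, η n • e n)|
        ≤ |e' a (x - ∑ n ∈ B, e' n x • e n + ((t / s) * γ) • ∑ n ∈ B \ A, η n • e n)| :=
  stmt17_general e e' hbi x t s γ hs0 hst A B hA hγ2 η hη
end
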